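/- Any Kirby–Paris Hydra is eventually slain no matter the strategy: the rewrite relation →_KP is strongly normalizing. -/

import Mathlib

namespace StarGames

/-- Unranked terms over signature `σ` and variables `X`. -/
inductive Term (σ : Type) (X : Type) : Type
  | var : X → Term σ X
  | app : σ → List (Term σ X) → Term σ X

variable {σ σ' X : Type}

/-- Relabeling of symbols. -/
def Term.relabel (h : σ → σ') : Term σ X → Term σ' X
  | .var x => .var x
  | .app f ts => .app (h f) (ts.attach.map fun ⟨t, _⟩ => t.relabel h)
decreasing_by
  have := List.sizeOf_lt_of_mem ‹_ ∈ ts›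
  simp only [Term.app.sizeOf_spec]
  omega

/-- Closure of a root-step relation under contexts (rewriting inside one argument). -/
inductive Rewrite (R : Term σ X → Term σ X → Prop) : Term σ X → Term σ X → Prop
  | root {s t : Term σ X} : R s t → Rewrite R s t
  | congr {s t : Term σ X} (f : σ) (pre post : List (Term σ X)) :
      Rewrite R s t →
      Rewrite R (Term.app f (pre ++ s :: post)) (Term.app f (pre ++ t :: post))

/-- Root steps of the swap TRS:  f(u⃗,x,y,w⃗) → f(u⃗,y,x,w⃗). -/
inductive SwapRoot : Term σ X → Term σ X → Prop
  | swap (f : σ) (us : List (Term σ X)) (x y : Term σ X) (ws : List (Term σ X)) :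
      SwapRoot (Term.app f (us ++ x :: y :: ws)) (Term.app f (us ++ y :: x :: ws))

/-- One swap step, anywhere in a term. -/
def SwapStep : Term σ X → Term σ X → Prop := Rewrite (SwapRoot (σ := σ) (X := X))

/-- `≃` : the equivalence relation generated by swap steps. -/
def TermEquiv : Term σ X → Term σ X → Prop := Relation.EqvGen SwapStep

def treeSetoid (σ X : Type) : Setoid (Term σ X) :=
  ⟨TermEquiv, Relation.EqvGen.is_equivalence _⟩

/-- (Unordered) trees: terms modulo permutation of arguments. -/
def Tree (σ X : Type) := Quotient (treeSetoid σ X)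

def Tree.mk (t : Term σ X) : Tree σ X := Quotient.mk (treeSetoid σ X) t

/-- Rewrite relation induced on trees by a root-step relation. -/
def TreeRel (R : Term σ X → Term σ X → Prop) : Tree σ X → Tree σ X → Prop :=
  fun a b => ∃ s t : Term σ X, a = Tree.mk s ∧ b = Tree.mk t ∧ Rewrite R s t

/-- Terms all of whose symbols satisfy `p`. -/
inductive Uses (p : σ → Prop) : Term σ X → Prop
  | var (x : X) : Uses p (Term.var x)
  | app (f : σ) (ts : List (Term σ X)) :
      p f → (∀ t ∈ ts, Uses p t) → Uses p (Term.app f ts)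

end StarGames

namespace StarGames

/-- The Kirby–Paris signature `{0, †}`. -/
inductive KP : Type
  | zero : KP
  | dagger : KP

/-- Root steps of the Kirby–Paris Hydra TRS.
`kp1`: `†(t⃗, 0) → †(t⃗)` removes a leaf labeled `0` directly below the root.
`kp2`: `f(t⃗₁, 0(t⃗₂, 0)) → f(t⃗₁, 0(t⃗₂), …, 0(t⃗₂))` (`k ≥ 0` copies). -/
inductive KPRoot : Term KP Empty → Term KP Empty → Prop
  | kp1 (ts : List (Term KP Empty)) :
      KPRoot (.app KP.dagger (ts ++ [Term.app KP.zero []]))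
             (.app KP.dagger ts)
  | kp2 (f : KP) (ts1 ts2 : List (Term KP Empty)) (k : ℕ) :
      KPRoot (.app f (ts1 ++ [Term.app KP.zero (ts2 ++ [Term.app KP.zero []])]))
             (.app f (ts1 ++ List.replicate k (Term.app KP.zero ts2)))

/-- All nodes are labeled `0`. -/
def OnlyZeros : Term KP Empty → Prop := Uses (fun s : KP => s = KP.zero)

/-- A Kirby–Paris Hydra (as a term): a finite tree with labels in `{0, †}`
in which `†` labels only the root. -/
def IsKPHydraTerm : Term KP Empty → Prop
  | Term.var x => x.elim
  | Term.app _ ts => ∀ t ∈ ts, OnlyZeros t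

/-- A Kirby–Paris Hydra (as an unordered tree). -/
def IsKPHydraTree (T : Tree KP Empty) : Prop :=
  ∃ t : Term KP Empty, T = Tree.mk t ∧ IsKPHydraTerm t

end StarGames


universe u

/-- Natural (Hessenberg) addition of ordinals. -/
noncomputable def Ordinal.nadd : Ordinal.{u} → Ordinal.{u} → Ordinal.{u}
  | a, b => max (Ordinal.blsub.{u, u} a fun a' _ => Ordinal.nadd a' b)
      (Ordinal.blsub.{u, u} b fun b' _ => Ordinal.nadd a b')
termination_by a b => (a, b)
decreasing_by
  · exact Prod.Lex.left _ _ ‹_›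
  · exact Prod.Lex.right _ ‹_›

infixl:65 " ♯ " => Ordinal.nadd

namespace Ordinal

theorem nadd_def (a b : Ordinal.{u}) : a ♯ b = max (blsub.{u, u} a fun a' _ => a' ♯ b)
    (blsub.{u, u} b fun b' _ => a ♯ b') := by
  rw [nadd]

theorem lt_nadd_iff {a b c : Ordinal.{u}} :
    a < b ♯ c ↔ (∃ b' < b, a ≤ b' ♯ c) ∨ ∃ c' < c, a ≤ b ♯ c' := by
  rw [nadd_def]
  simp [lt_blsub_iff]

theorem nadd_le_iff {a b c : Ordinal.{u}} :
    b ♯ c ≤ a ↔ (∀ b' < b, b' ♯ c < a) ∧ ∀ c' < c, b ♯ c' < a := by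
  rw [nadd_def]
  simp [blsub_le_iff]

theorem nadd_lt_nadd_left {b c : Ordinal.{u}} (h : b < c) (a : Ordinal.{u}) : a ♯ b < a ♯ c :=
  lt_nadd_iff.2 (Or.inr ⟨b, h, le_rfl⟩)

theorem nadd_lt_nadd_right {b c : Ordinal.{u}} (h : b < c) (a : Ordinal.{u}) : b ♯ a < c ♯ a :=
  lt_nadd_iff.2 (Or.inl ⟨b, h, le_rfl⟩)

theorem nadd_le_nadd_left {b c : Ordinal.{u}} (h : b ≤ c) (a : Ordinal.{u}) : a ♯ b ≤ a ♯ c := by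
  rcases h.lt_or_eq with h | rfl
  · exact (nadd_lt_nadd_left h a).le
  · exact le_rfl

theorem nadd_le_nadd_right {b c : Ordinal.{u}} (h : b ≤ c) (a : Ordinal.{u}) : b ♯ a ≤ c ♯ a := by
  rcases h.lt_or_eq with h | rfl
  · exact (nadd_lt_nadd_right h a).le
  · exact le_rfl

theorem nadd_comm : ∀ a b : Ordinal.{u}, a ♯ b = b ♯ a := by
  intro a
  induction a using Ordinal.induction with
  | _ a IHa =>
  intro b
  induction b using Ordinal.induction with
  | _ b IHb =>
  apply le_antisymm
  · rw [nadd_le_iff]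
    constructor
    · intro x hx
      rw [IHa x hx]
      exact nadd_lt_nadd_left hx b
    · intro x hx
      rw [IHb x hx]
      exact nadd_lt_nadd_right hx a
  · rw [nadd_le_iff]
    constructor
    · intro x hx
      rw [← IHb x hx]
      exact nadd_lt_nadd_left hx a
    · intro x hx
      rw [← IHa x hx]
      exact nadd_lt_nadd_right hx b

@[simp] theorem nadd_zero : ∀ a : Ordinal.{u}, a ♯ 0 = a := by
  intro a
  induction a using Ordinal.induction with
  | _ a IH =>
  apply le_antisymm
  · rw [nadd_le_iff]
    constructor
    · intro x hx
      rw [IH x hx]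
      exact hx
    · intro x hx
      exact absurd hx not_lt_zero
  · apply le_of_forall_lt
    intro c hc
    rw [← IH c hc]
    exact nadd_lt_nadd_right hc 0

@[simp] theorem zero_nadd (a : Ordinal.{u}) : 0 ♯ a = a := by
  rw [nadd_comm, nadd_zero]

theorem nadd_assoc : ∀ a b c : Ordinal.{u}, a ♯ b ♯ c = a ♯ (b ♯ c) := by
  intro a
  induction a using Ordinal.induction with
  | _ a IHa =>
  intro b
  induction b using Ordinal.induction with
  | _ b IHb =>
  intro c
  induction c using Ordinal.induction with
  | _ c IHc =>
  apply le_antisymm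
  · rw [nadd_le_iff]
    constructor
    · intro d hd
      rcases lt_nadd_iff.1 hd with ⟨a', ha', hd'⟩ | ⟨b', hb', hd'⟩
      · calc d ♯ c ≤ a' ♯ b ♯ c := nadd_le_nadd_right hd' c
          _ = a' ♯ (b ♯ c) := IHa a' ha' b c
          _ < a ♯ (b ♯ c) := nadd_lt_nadd_right ha' _
      · calc d ♯ c ≤ a ♯ b' ♯ c := nadd_le_nadd_right hd' c
          _ = a ♯ (b' ♯ c) := IHb b' hb' c
          _ < a ♯ (b ♯ c) := nadd_lt_nadd_left (nadd_lt_nadd_right hb' c) a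
    · intro c' hc'
      rw [IHc c' hc']
      exact nadd_lt_nadd_left (nadd_lt_nadd_left hc' b) a
  · rw [nadd_le_iff]
    constructor
    · intro a' ha'
      rw [← IHa a' ha']
      exact nadd_lt_nadd_right (nadd_lt_nadd_right ha' b) c
    · intro e he
      rcases lt_nadd_iff.1 he with ⟨b', hb', he'⟩ | ⟨c', hc', he'⟩
      · calc a ♯ e ≤ a ♯ (b' ♯ c) := nadd_le_nadd_left he' a
          _ = a ♯ b' ♯ c := (IHb b' hb' c).symm
          _ < a ♯ b ♯ c := nadd_lt_nadd_right (nadd_lt_nadd_left hb' a) c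
      · calc a ♯ e ≤ a ♯ (b ♯ c') := nadd_le_nadd_left he' a
          _ = a ♯ b ♯ c' := (IHc c' hc').symm
          _ < a ♯ b ♯ c := nadd_lt_nadd_left hc' _

theorem le_nadd_self (a b : Ordinal.{u}) : a ≤ a ♯ b := by
  have := nadd_le_nadd_left (zero_le : (0 : Ordinal.{u}) ≤ b) a
  rwa [nadd_zero] at this

theorem add_le_nadd (a b : Ordinal.{u}) : a + b ≤ a ♯ b := by
  induction b using Ordinal.induction with
  | _ b IH =>
  apply le_of_forall_lt
  intro c hc
  rcases lt_or_ge c a with h | h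
  · exact h.trans_le (le_nadd_self a b)
  · have hd : c - a < b := by
      rw [← add_lt_add_iff_left a, Ordinal.add_sub_cancel_of_le h]
      exact hc
    calc c = a + (c - a) := (Ordinal.add_sub_cancel_of_le h).symm
      _ ≤ a ♯ (c - a) := IH _ hd
      _ < a ♯ b := nadd_lt_nadd_left hd a

theorem nadd_one : ∀ a : Ordinal.{u}, a ♯ 1 = Order.succ a := by
  intro a
  induction a using Ordinal.induction with
  | _ a IH =>
  apply le_antisymm
  · rw [nadd_le_iff]
    constructor
    · intro a' ha'
      rw [IH a' ha']
      exact Order.succ_lt_succ ha'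
    · intro c hc
      rw [Ordinal.lt_one_iff_zero.1 hc, nadd_zero]
      exact Order.lt_succ a
  · apply Order.succ_le_of_lt
    have := nadd_lt_nadd_left (zero_lt_one : (0 : Ordinal.{u}) < 1) a
    rwa [nadd_zero] at this

end Ordinal

/-- Ordinals with natural addition. -/
def NatOrdinal : Type (u + 1) := Ordinal.{u}

namespace NatOrdinal

noncomputable instance : LinearOrder NatOrdinal.{u} := inferInstanceAs (LinearOrder Ordinal.{u})

instance : WellFoundedLT NatOrdinal.{u} := inferInstanceAs (WellFoundedLT Ordinal.{u})

instance : Zero NatOrdinal.{u} := ⟨(0 : Ordinal.{u})⟩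

noncomputable instance : Add NatOrdinal.{u} := ⟨Ordinal.nadd⟩

noncomputable instance : AddCommMonoid NatOrdinal.{u} where
  add := Ordinal.nadd
  zero := (0 : Ordinal.{u})
  add_assoc := Ordinal.nadd_assoc
  zero_add := Ordinal.zero_nadd
  add_zero := Ordinal.nadd_zero
  add_comm := Ordinal.nadd_comm
  nsmul := nsmulRec
  nsmul_zero := fun _ => rfl
  nsmul_succ := fun _ _ => rfl

instance : One NatOrdinal.{u} := ⟨(1 : Ordinal.{u})⟩

instance : AddLeftStrictMono NatOrdinal.{u} :=
  ⟨fun a _ _ h => Ordinal.nadd_lt_nadd_left h a⟩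

instance : AddRightStrictMono NatOrdinal.{u} :=
  ⟨fun a _ _ h => Ordinal.nadd_lt_nadd_right h a⟩

instance : AddLeftMono NatOrdinal.{u} :=
  ⟨fun a _ _ h => Ordinal.nadd_le_nadd_left h a⟩

instance : AddRightMono NatOrdinal.{u} :=
  ⟨fun a _ _ h => Ordinal.nadd_le_nadd_right h a⟩

/-- The identity, as an order isomorphism to `Ordinal`. -/
noncomputable def toOrdinal : NatOrdinal.{u} ≃o Ordinal.{u} := OrderIso.refl _

@[simp] theorem toOrdinal_zero : toOrdinal (0 : NatOrdinal.{u}) = 0 := rfl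

@[simp] theorem toOrdinal_one : toOrdinal (1 : NatOrdinal.{u}) = 1 := rfl

end NatOrdinal

/-- The identity, as an order isomorphism to `NatOrdinal`. -/
noncomputable def Ordinal.toNatOrdinal : Ordinal.{u} ≃o NatOrdinal.{u} := OrderIso.refl _

@[simp] theorem Ordinal.toNatOrdinal_zero : Ordinal.toNatOrdinal (0 : Ordinal.{u}) = 0 := rfl

@[simp] theorem Ordinal.toNatOrdinal_one : Ordinal.toNatOrdinal (1 : Ordinal.{u}) = 1 := rfl

@[simp] theorem NatOrdinal.toOrdinal_toNatOrdinal (a : Ordinal.{u}) :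
    NatOrdinal.toOrdinal (Ordinal.toNatOrdinal a) = a := rfl

@[simp] theorem Ordinal.toNatOrdinal_toOrdinal (a : NatOrdinal.{u}) :
    Ordinal.toNatOrdinal (NatOrdinal.toOrdinal a) = a := rfl

theorem Ordinal.nadd_eq_add (a b : Ordinal.{u}) :
    a ♯ b = NatOrdinal.toOrdinal (Ordinal.toNatOrdinal a + Ordinal.toNatOrdinal b) := rfl

open Ordinal Order

namespace HydraAux

theorem mns (W : Ordinal) (n : ℕ) : W * ((n : ℕ) + 1 : ℕ) = W * n + W := by
  rw [Nat.cast_add, Nat.cast_one, mul_add, mul_one]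

/-- Absorption: `ω^c * i ♯ r = ω^c * i + r` for `r < ω^c`, given that `ω^c` is
closed under natural addition. -/
theorem absorb {c : Ordinal} (H : ∀ x < ω ^ c, ∀ y < ω ^ c, x ♯ y < ω ^ c) :
    ∀ i : ℕ, ∀ r < ω ^ c, ω ^ c * i ♯ r = ω ^ c * i + r := by
  have hW : (ω ^ c) ≠ 0 := (opow_pos c omega0_pos).ne'
  intro i
  induction i using Nat.strong_induction_on with
  | _ i IHi =>
  intro r
  induction r using Ordinal.induction with
  | _ r IHr =>
  intro hr
  refine le_antisymm (nadd_le_iff.2 ⟨?_, ?_⟩) (add_le_nadd _ _)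
  · intro b hb
    have hdiv : b / ω ^ c < (i : Ordinal) := (Ordinal.div_lt hW).2 hb
    obtain ⟨i', hi'⟩ := Ordinal.lt_omega0.1 (hdiv.trans (nat_lt_omega0 i))
    have hi'i : i' < i := by exact_mod_cast hi' ▸ hdiv
    have hmod : b % ω ^ c < ω ^ c := Ordinal.mod_lt b hW
    have hb' : b = ω ^ c * i' + b % ω ^ c := by rw [← hi', Ordinal.div_add_mod]
    have hrs : b % ω ^ c ♯ r < ω ^ c := H _ hmod _ hr
    calc b ♯ r = (ω ^ c * i' ♯ b % ω ^ c) ♯ r := by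
              rw [IHi i' hi'i _ hmod, ← hb']
      _ = ω ^ c * i' ♯ (b % ω ^ c ♯ r) := nadd_assoc _ _ _
      _ = ω ^ c * i' + (b % ω ^ c ♯ r) := IHi i' hi'i _ hrs
      _ < ω ^ c * i' + ω ^ c := add_lt_add_right hrs _
      _ = ω ^ c * (i' + 1 : ℕ) := (mns _ i').symm
      _ ≤ ω ^ c * i := by
              apply mul_le_mul_right
              exact_mod_cast Nat.succ_le_of_lt hi'i
      _ ≤ ω ^ c * i + r := le_add_right le_rfl
  · intro r' hr'
    rw [IHr r' hr' (hr'.trans hr)]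
    exact add_lt_add_right hr' _

theorem step {c : Ordinal} (H : ∀ x < ω ^ c, ∀ y < ω ^ c, x ♯ y < ω ^ c) :
    ∀ n : ℕ, ω ^ c * n ♯ ω ^ c = ω ^ c * n + ω ^ c := by
  have hW : (ω ^ c) ≠ 0 := (opow_pos c omega0_pos).ne'
  intro n
  induction n using Nat.strong_induction_on with
  | _ n IHn =>
  refine le_antisymm (nadd_le_iff.2 ⟨?_, ?_⟩) (add_le_nadd _ _)
  · intro b hb
    have hdiv : b / ω ^ c < (n : Ordinal) := (Ordinal.div_lt hW).2 hb
    obtain ⟨i', hi'⟩ := Ordinal.lt_omega0.1 (hdiv.trans (nat_lt_omega0 n))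
    have hi'n : i' < n := by exact_mod_cast hi' ▸ hdiv
    have hmod : b % ω ^ c < ω ^ c := Ordinal.mod_lt b hW
    have hb' : b = ω ^ c * i' + b % ω ^ c := by rw [← hi', Ordinal.div_add_mod]
    calc b ♯ ω ^ c = (ω ^ c * i' ♯ b % ω ^ c) ♯ ω ^ c := by
              rw [absorb H i' _ hmod, ← hb']
      _ = ω ^ c * i' ♯ (ω ^ c ♯ b % ω ^ c) := by
              rw [nadd_assoc, nadd_comm (b % ω ^ c)]
      _ = (ω ^ c * i' ♯ ω ^ c) ♯ b % ω ^ c := (nadd_assoc _ _ _).symm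
      _ = (ω ^ c * i' + ω ^ c) ♯ b % ω ^ c := by rw [IHn i' hi'n]
      _ = ω ^ c * (i' + 1 : ℕ) ♯ b % ω ^ c := by rw [mns]
      _ = ω ^ c * (i' + 1 : ℕ) + b % ω ^ c := absorb H _ _ hmod
      _ < ω ^ c * (i' + 1 : ℕ) + ω ^ c := add_lt_add_right hmod _
      _ = ω ^ c * ((i' + 1) + 1 : ℕ) := (mns _ (i' + 1)).symm
      _ ≤ ω ^ c * n + ω ^ c := by
              rw [← mns]
              apply mul_le_mul_right
              exact_mod_cast Nat.succ_le_succ (Nat.succ_le_of_lt hi'n)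
  · intro s hs
    rw [absorb H n s hs]
    exact add_lt_add_right hs _

theorem blocks {c : Ordinal} (H : ∀ x < ω ^ c, ∀ y < ω ^ c, x ♯ y < ω ^ c) :
    ∀ (j i : ℕ), ω ^ c * i ♯ ω ^ c * j = ω ^ c * (i + j : ℕ) := by
  intro j
  induction j with
  | zero => intro i; simp
  | succ j IH =>
    intro i
    calc ω ^ c * i ♯ ω ^ c * (j + 1 : ℕ)
        = ω ^ c * i ♯ (ω ^ c * j ♯ ω ^ c) := by rw [mns, step H]
      _ = (ω ^ c * i ♯ ω ^ c * j) ♯ ω ^ c := (nadd_assoc _ _ _).symm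
      _ = ω ^ c * (i + j : ℕ) ♯ ω ^ c := by rw [IH]
      _ = ω ^ c * (i + j : ℕ) + ω ^ c := step H _
      _ = ω ^ c * (i + (j + 1) : ℕ) := (mns _ (i + j)).symm

/-- `ω ^ e` is closed under natural addition. -/
theorem nadd_lt_opow : ∀ e : Ordinal, ∀ x < ω ^ e, ∀ y < ω ^ e, x ♯ y < ω ^ e := by
  intro e
  induction e using Ordinal.induction with
  | _ e IH =>
  intro x hx y hy
  rcases eq_or_ne x 0 with rfl | hx0
  · simpa using hy
  rcases eq_or_ne y 0 with rfl | hy0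
  · simpa using hx
  set c : Ordinal := max (log ω x) (log ω y) with hc
  have hce : c < e := by
    apply max_lt
    · exact (lt_opow_iff_log_lt one_lt_omega0 hx0).1 hx
    · exact (lt_opow_iff_log_lt one_lt_omega0 hy0).1 hy
  have hWpos : (0 : Ordinal) < ω ^ c := opow_pos c omega0_pos
  have hW : (ω ^ c) ≠ 0 := hWpos.ne'
  have H : ∀ x < ω ^ c, ∀ y < ω ^ c, x ♯ y < ω ^ c := IH c hce
  -- x, y < ω ^ c * ω
  have hx2 : x < ω ^ c * ω := by
    calc x < ω ^ succ (log ω x) := lt_opow_succ_log_self one_lt_omega0 x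
      _ ≤ ω ^ succ c := opow_le_opow_right omega0_pos (succ_le_succ (le_max_left _ _))
      _ = ω ^ c * ω := opow_succ _ _
  have hy2 : y < ω ^ c * ω := by
    calc y < ω ^ succ (log ω y) := lt_opow_succ_log_self one_lt_omega0 y
      _ ≤ ω ^ succ c := opow_le_opow_right omega0_pos (succ_le_succ (le_max_right _ _))
      _ = ω ^ c * ω := opow_succ _ _
  obtain ⟨p', hp', hxp⟩ := (lt_mul_iff_of_isSuccLimit isSuccLimit_omega0).1 hx2
  obtain ⟨q', hq', hyq⟩ := (lt_mul_iff_of_isSuccLimit isSuccLimit_omega0).1 hy2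
  obtain ⟨p, rfl⟩ := Ordinal.lt_omega0.1 hp'
  obtain ⟨q, rfl⟩ := Ordinal.lt_omega0.1 hq'
  -- decompose
  have hdx : x / ω ^ c < (p : Ordinal) := (Ordinal.div_lt hW).2 hxp
  obtain ⟨i, hi⟩ := Ordinal.lt_omega0.1 (hdx.trans (nat_lt_omega0 p))
  have hdy : y / ω ^ c < (q : Ordinal) := (Ordinal.div_lt hW).2 hyq
  obtain ⟨j, hj⟩ := Ordinal.lt_omega0.1 (hdy.trans (nat_lt_omega0 q))
  have hrx : x % ω ^ c < ω ^ c := Ordinal.mod_lt x hW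
  have hry : y % ω ^ c < ω ^ c := Ordinal.mod_lt y hW
  have hxd : x = ω ^ c * i + x % ω ^ c := by rw [← hi, Ordinal.div_add_mod]
  have hyd : y = ω ^ c * j + y % ω ^ c := by rw [← hj, Ordinal.div_add_mod]
  have hrs : x % ω ^ c ♯ y % ω ^ c < ω ^ c := H _ hrx _ hry
  calc x ♯ y = (ω ^ c * i ♯ x % ω ^ c) ♯ (ω ^ c * j ♯ y % ω ^ c) := by
          rw [absorb H i _ hrx, absorb H j _ hry, ← hxd, ← hyd]
    _ = (ω ^ c * i ♯ ω ^ c * j) ♯ (x % ω ^ c ♯ y % ω ^ c) := by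
          rw [nadd_assoc, nadd_assoc, ← nadd_assoc (x % ω ^ c),
            nadd_comm (x % ω ^ c) (ω ^ c * j), nadd_assoc]
    _ = ω ^ c * (i + j : ℕ) ♯ (x % ω ^ c ♯ y % ω ^ c) := by rw [blocks H]
    _ = ω ^ c * (i + j : ℕ) + (x % ω ^ c ♯ y % ω ^ c) := absorb H _ _ hrs
    _ < ω ^ c * (i + j : ℕ) + ω ^ c := add_lt_add_right hrs _
    _ = ω ^ c * (i + j + 1 : ℕ) := (mns _ (i + j)).symm
    _ < ω ^ c * ω := mul_lt_mul_of_pos_left (nat_lt_omega0 _) hWpos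
    _ = ω ^ succ c := (opow_succ _ _).symm
    _ ≤ ω ^ e := opow_le_opow_right omega0_pos (succ_le_of_lt hce)

end HydraAux


namespace StarGames

open Ordinal Order HydraAux

/-- `ω ^ a` as a `NatOrdinal`. -/
noncomputable def w (a : NatOrdinal.{0}) : NatOrdinal.{0} :=
  Ordinal.toNatOrdinal (ω ^ NatOrdinal.toOrdinal a)

theorem w_lt_w {a b : NatOrdinal} (h : a < b) : w a < w b :=
  Ordinal.toNatOrdinal.lt_iff_lt.2 <|
    (opow_lt_opow_iff_right one_lt_omega0).2 (NatOrdinal.toOrdinal.lt_iff_lt.2 h)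

theorem w_pos (a : NatOrdinal) : 0 < w a :=
  Ordinal.toNatOrdinal.lt_iff_lt.2 (opow_pos _ omega0_pos)

theorem toOrdinal_add (x y : NatOrdinal) :
    NatOrdinal.toOrdinal (x + y) = NatOrdinal.toOrdinal x ♯ NatOrdinal.toOrdinal y := by
  rw [Ordinal.nadd_eq_add]
  simp

theorem add_lt_w {e x y : NatOrdinal} (hx : x < w e) (hy : y < w e) : x + y < w e := by
  have hx' : NatOrdinal.toOrdinal x < ω ^ NatOrdinal.toOrdinal e := hx
  have hy' : NatOrdinal.toOrdinal y < ω ^ NatOrdinal.toOrdinal e := hy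
  have := nadd_lt_opow (NatOrdinal.toOrdinal e) _ hx' _ hy'
  rw [← toOrdinal_add] at this
  exact this

theorem toOrdinal_add_one (A : NatOrdinal) :
    NatOrdinal.toOrdinal (A + 1) = NatOrdinal.toOrdinal A + 1 := by
  rw [toOrdinal_add, NatOrdinal.toOrdinal_one, nadd_one, add_one_eq_succ]

theorem w_lt_w_add_one (A : NatOrdinal) : w A < w (A + 1) :=
  w_lt_w (lt_add_of_pos_right A (w_pos 0 |>.trans_le (by
    have : w (0 : NatOrdinal) = 1 := by
      simp [w]
    rw [this])))

theorem nsmul_w_lt (k : ℕ) (A : NatOrdinal) : k • w A < w (A + 1) := by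
  induction k with
  | zero => simpa using w_pos (A + 1)
  | succ k ih =>
    rw [succ_nsmul]
    exact add_lt_w ih (w_lt_w_add_one A)

/-- The ordinal measure of a term: children `t` contribute `ω ^ μ t`,
added with the (commutative) natural sum. -/
noncomputable def mu : Term KP Empty → NatOrdinal
  | .var _ => 0
  | .app _ ts => (ts.attach.map fun t => w (mu t.1)).sum
decreasing_by
  have := List.sizeOf_lt_of_mem t.2
  simp only [Term.app.sizeOf_spec]
  omega

theorem mu_app (f : KP) (ts : List (Term KP Empty)) :
    mu (.app f ts) = (ts.map fun t => w (mu t)).sum := by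
  rw [mu]
  congr 1
  exact List.attach_map_val (l := ts) (f := fun t => w (mu t))

theorem mu_swap {s t : Term KP Empty} (h : SwapStep s t) : mu s = mu t := by
  induction h with
  | root h =>
    cases h with
    | swap f us x y ws =>
      rw [mu_app, mu_app]
      simp only [List.map_append, List.sum_append, List.map_cons, List.sum_cons]
      rw [add_left_comm (w (mu x)) (w (mu y))]
  | congr f pre post h ih =>
    rw [mu_app, mu_app]
    simp only [List.map_append, List.sum_append, List.map_cons, List.sum_cons, ih]

theorem mu_equiv {s t : Term KP Empty} (h : TermEquiv s t) : mu s = mu t := by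
  induction h with
  | rel _ _ h => exact mu_swap h
  | refl _ => rfl
  | symm _ _ _ ih => exact ih.symm
  | trans _ _ _ _ _ ih1 ih2 => exact ih1.trans ih2

theorem mu_decreasing {s t : Term KP Empty} (h : Rewrite KPRoot s t) : mu t < mu s := by
  induction h with
  | root h =>
    cases h with
    | kp1 ts =>
      rw [mu_app, mu_app]
      simp only [List.map_append, List.sum_append, List.map_cons, List.sum_cons,
        List.map_nil, List.sum_nil, add_zero]
      exact lt_add_of_pos_right _ (w_pos _)
    | kp2 f ts1 ts2 k =>
      rw [mu_app, mu_app]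
      simp only [List.map_append, List.sum_append, List.map_cons, List.sum_cons,
        List.map_nil, List.sum_nil, add_zero, List.map_replicate, List.sum_replicate]
      apply add_lt_add_right
      have h1 : mu (Term.app KP.zero (ts2 ++ [Term.app KP.zero []]))
          = mu (Term.app KP.zero ts2) + 1 := by
        rw [mu_app, mu_app]
        simp only [List.map_append, List.sum_append, List.map_cons, List.sum_cons,
          List.map_nil, List.sum_nil, add_zero, mu_app]
        congr 1
        simp [w]
      rw [h1]
      exact nsmul_w_lt k _
  | congr f pre post h ih =>
    rw [mu_app, mu_app]
    simp only [List.map_append, List.sum_append, List.map_cons, List.sum_cons]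
    exact add_lt_add_right (add_lt_add_left (w_lt_w ih) _) _

/-- The measure descends to unordered trees. -/
noncomputable def muT : Tree KP Empty → NatOrdinal :=
  Quotient.lift mu fun _ _ h => mu_equiv h

@[simp] theorem muT_mk (t : Term KP Empty) : muT (Tree.mk t) = mu t := rfl

end StarGames

namespace StarGames

/-- Any Kirby–Paris Hydra is eventually slain no matter the strategy:
the rewrite relation `→_KP` is strongly normalizing. -/
theorem kp_hydra_sn :
    ¬ ∃ f : ℕ → Tree KP Empty,
        (∀ n : ℕ, IsKPHydraTree (f n)) ∧
        (∀ n : ℕ, TreeRel KPRoot (f n) (f (n + 1))) := by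
  rintro ⟨f, -, hstep⟩
  set g : ℕ → NatOrdinal := fun n => muT (f n) with hg
  have hdec : ∀ n, g (n + 1) < g n := by
    intro n
    obtain ⟨s, t, hs, ht, hr⟩ := hstep n
    have h1 : g n = mu s := by rw [hg]; simp only [hs, muT_mk]
    have h2 : g (n + 1) = mu t := by rw [hg]; simp only [ht, muT_mk]
    rw [h1, h2]
    exact mu_decreasing hr
  have wf : WellFounded ((· < ·) : NatOrdinal → NatOrdinal → Prop) := wellFounded_lt
  obtain ⟨n, hn⟩ := wf.min_mem (Set.range g) ⟨g 0, 0, rfl⟩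
  exact wf.not_lt_min (Set.range g) ⟨n + 1, rfl⟩ (hn ▸ hdec n)

end StarGames
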